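/- Let U be a universal operator on a separable infinite-dimensional complex Hilbert space H. Then there exists r > 0 such that every λ ∈ ℂ with |λ| < r is an eigenvalue of U of infinite multiplicity, i.e. the kernel Ker(U − λI) is an infinite-dimensional subspace of H. In particular, the open disk B(0,r) is contained in the spectrum σ(U; H), so 0 is an interior point of σ(U; H), of the point spectrum of U, and of the essential spectrum of U. -/

import Mathlib

noncomputable section

/-- Universal operator on a complex Hilbert space. -/
def IsUniversal {H : Type*} [NormedAddCommGroup H] [InnerProductSpace ℂ H]
    (U : H →L[ℂ] H) : Prop :=
  ∀ T : H →L[ℂ] H, ∃ M : Submodule ℂ H, IsClosed (M : Set H) ∧ (∀ x ∈ M, U x ∈ M) ∧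
    ∃ c : ℂ, c ≠ 0 ∧ ∃ J : H ≃L[ℂ] M, ∀ x : H, U (J x : H) = c • ((J (T x) : H))

/-- The point spectrum of an operator: the set of its eigenvalues. -/
def pointSpectrum {H : Type*} [NormedAddCommGroup H] [InnerProductSpace ℂ H]
    (T : H →L[ℂ] H) : Set ℂ :=
  {z : ℂ | LinearMap.ker ((T - z • (1 : H →L[ℂ] H) : H →L[ℂ] H) : H →ₗ[ℂ] H) ≠ ⊥}

/-- A bounded operator is Fredholm if its kernel is finite-dimensional and its range is
closed of finite codimension. -/
def IsFredholmOp {H : Type*} [NormedAddCommGroup H] [InnerProductSpace ℂ H]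
    (S : H →L[ℂ] H) : Prop :=
  FiniteDimensional ℂ (LinearMap.ker (S : H →ₗ[ℂ] H)) ∧ IsClosed (LinearMap.range (S : H →ₗ[ℂ] H) : Set H) ∧
    FiniteDimensional ℂ (H ⧸ LinearMap.range (S : H →ₗ[ℂ] H))

/-- The essential spectrum of an operator. -/
def essentialSpectrum {H : Type*} [NormedAddCommGroup H] [InnerProductSpace ℂ H]
    (T : H →L[ℂ] H) : Set ℂ :=
  {z : ℂ | ¬ IsFredholmOp (T - z • (1 : H →L[ℂ] H))}

/-!
Universality transfers eigenvectors: if `U ∘ J = c • J ∘ T` with `J` injective, then `J` maps the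
`w`-eigenspace of `T` injectively into the `c w`-eigenspace of `U`. So it suffices to exhibit one
operator `T` on `H` whose `w`-eigenspaces are infinite-dimensional for all `‖w‖ < 1`; then
`r = ‖c‖` works. Identifying `H` with `ℓ²(ℕ × ℕ)` through a Hilbert basis, take the backward shift
`(S f) (m, k) = f (m + 1, k)`: its `w`-eigenspace contains the independent vectors
`(m, k) ↦ if k = j then w ^ m else 0`, `j ∈ ℕ`.
-/

open scoped ENNReal

section Precomposition

variable {ι κ 𝕜 E : Type*} {p : ℝ≥0∞} [NormedAddCommGroup E]

theorem Memℓp.comp_injective {f : ι → E} (hf : Memℓp f p) {σ : κ → ι}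
    (hσ : σ.Injective) : Memℓp (f ∘ σ) p := by
  obtain rfl | rfl | hp := p.trichotomy
  · rw [memℓp_zero_iff] at hf ⊢
    exact hf.preimage hσ.injOn
  · rw [memℓp_infty_iff] at hf ⊢
    exact hf.mono (Set.range_comp_subset_range σ fun i => ‖f i‖)
  · exact memℓp_gen ((hf.summable hp).comp_injective hσ)

namespace lp

theorem norm_le_of_comp_injective [Fact (1 ≤ p)] {f : lp (fun _ : ι => E) p}
    {g : lp (fun _ : κ => E) p} {σ : κ → ι} (hσ : σ.Injective) (hg : ∀ k, g k = f (σ k)) :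
    ‖g‖ ≤ ‖f‖ := by
  have hp0 : p ≠ 0 := (zero_lt_one.trans_le Fact.out).ne'
  obtain rfl | rfl | hp := p.trichotomy
  · exact absurd rfl hp0
  · exact norm_le_of_forall_le (norm_nonneg f) fun k => hg k ▸ norm_apply_le_norm hp0 f (σ k)
  · refine norm_le_of_forall_sum_le hp (norm_nonneg f) fun s => ?_
    calc ∑ k ∈ s, ‖g k‖ ^ p.toReal = ∑ i ∈ s.map ⟨σ, hσ⟩, ‖f i‖ ^ p.toReal := by
          simp only [Finset.sum_map, hg]; rfl
      _ ≤ ‖f‖ ^ p.toReal := sum_rpow_le_norm_rpow hp f _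

variable [NormedField 𝕜] [NormedSpace 𝕜 E] [Fact (1 ≤ p)]

variable (𝕜 E p) in
def compCLM {σ : κ → ι} (hσ : σ.Injective) :
    lp (fun _ : ι => E) p →L[𝕜] lp (fun _ : κ => E) p :=
  LinearMap.mkContinuous
    { toFun f := ⟨f ∘ σ, (lp.memℓp f).comp_injective hσ⟩
      map_add' _ _ := rfl
      map_smul' _ _ := rfl } 1
    fun _ => by rw [one_mul]; exact norm_le_of_comp_injective hσ fun _ => rfl

@[simp]
theorem compCLM_apply {σ : κ → ι} (hσ : σ.Injective) (f : lp (fun _ : ι => E) p) (k : κ) :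
    compCLM 𝕜 E p hσ f k = f (σ k) :=
  rfl

variable (𝕜 E p) in
def congrLeft (e : κ ≃ ι) : lp (fun _ : ι => E) p ≃ₗᵢ[𝕜] lp (fun _ : κ => E) p where
  toLinearMap := compCLM 𝕜 E p e.injective
  invFun := compCLM 𝕜 E p e.symm.injective
  left_inv f := by ext i; simp
  right_inv f := by ext k; simp
  norm_map' f := le_antisymm (norm_le_of_comp_injective e.injective fun _ => rfl)
    (norm_le_of_comp_injective e.symm.injective fun i => by simp)

end lp

end Precomposition

theorem Submodule.not_finiteDimensional_of_linearIndependent {K V ι : Type*} [Field K]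
    [AddCommGroup V] [Module K V] [Infinite ι] {S : Submodule K V} {v : ι → V}
    (hv : LinearIndependent K v) (hS : ∀ i, v i ∈ S) : ¬ FiniteDimensional K S := fun _ =>
  Module.Finite.not_linearIndependent_of_infinite (fun i => (⟨v i, hS i⟩ : S))
    (.of_comp S.subtype hv)

section BackwardShift

variable {𝕜 : Type*} [NormedField 𝕜] {p : ℝ≥0∞} [Fact (1 ≤ p)]

variable (𝕜 p) in
def backwardShift : lp (fun _ : ℕ × ℕ => 𝕜) p →L[𝕜] lp (fun _ : ℕ × ℕ => 𝕜) p :=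
  lp.compCLM 𝕜 𝕜 p (Nat.succ_injective.prodMap Function.injective_id)

theorem memℓp_geomRow {z : 𝕜} (hz : ‖z‖ < 1) (j : ℕ) :
    Memℓp (fun n : ℕ × ℕ => if n.2 = j then z ^ n.1 else 0) p := by
  have hp0 : p ≠ 0 := (zero_lt_one.trans_le Fact.out).ne'
  obtain rfl | rfl | hp := p.trichotomy
  · exact absurd rfl hp0
  · refine memℓp_infty_iff.2 ⟨1, ?_⟩
    rintro - ⟨n, rfl⟩
    dsimp only
    split_ifs
    · simpa using pow_le_one₀ (norm_nonneg z) hz.le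
    · simp
  · refine memℓp_gen <| ((Prod.mk_left_injective j).summable_iff fun n hn => ?_).1 ?_
    · have : n.2 ≠ j := fun h => hn ⟨n.1, by rw [← h]⟩
      simp [this, Real.zero_rpow hp.ne']
    · simpa [Function.comp_def, ← Real.rpow_natCast, ← Real.rpow_mul (norm_nonneg z), mul_comm]
        using summable_geometric_of_lt_one (by positivity)
          (Real.rpow_lt_one (norm_nonneg z) hz hp)

def geomRow {z : 𝕜} (hz : ‖z‖ < 1) (j : ℕ) : lp (fun _ : ℕ × ℕ => 𝕜) p :=
  ⟨_, memℓp_geomRow hz j⟩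

theorem geomRow_apply {z : 𝕜} (hz : ‖z‖ < 1) (j : ℕ) (n : ℕ × ℕ) :
    (geomRow hz j : lp (fun _ : ℕ × ℕ => 𝕜) p) n = if n.2 = j then z ^ n.1 else 0 :=
  rfl

theorem backwardShift_geomRow {z : 𝕜} (hz : ‖z‖ < 1) (j : ℕ) :
    backwardShift 𝕜 p (geomRow hz j) = z • geomRow hz j := by
  ext n
  simp [backwardShift, geomRow_apply, pow_succ']

theorem linearIndependent_geomRow {z : 𝕜} (hz : ‖z‖ < 1) :
    LinearIndependent 𝕜 (geomRow hz : ℕ → lp (fun _ : ℕ × ℕ => 𝕜) p) := by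
  let firstColumn : lp (fun _ : ℕ × ℕ => 𝕜) p →ₗ[𝕜] ℕ → 𝕜 :=
    LinearMap.pi fun k => lp.evalₗ _ p (0, k)
  refine LinearIndependent.of_comp firstColumn ?_
  convert Pi.linearIndependent_single_one ℕ 𝕜 using 1
  ext j k
  simp [firstColumn, geomRow_apply, Pi.single_apply, eq_comm]

theorem not_finiteDimensional_eigenspace_backwardShift {z : 𝕜} (hz : ‖z‖ < 1) :
    ¬ FiniteDimensional 𝕜 (Module.End.eigenspace
      (backwardShift 𝕜 p : lp (fun _ : ℕ × ℕ => 𝕜) p →ₗ[𝕜] lp (fun _ : ℕ × ℕ => 𝕜) p) z) :=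
  Submodule.not_finiteDimensional_of_linearIndependent (linearIndependent_geomRow hz)
    fun j => Module.End.mem_eigenspace_iff.2 (backwardShift_geomRow hz j)

end BackwardShift

section HilbertBasis

variable {ι κ 𝕜 E : Type*} [RCLike 𝕜] [NormedAddCommGroup E] [InnerProductSpace 𝕜 E]

def HilbertBasis.reindex (b : HilbertBasis ι 𝕜 E) (e : ι ≃ κ) : HilbertBasis κ 𝕜 E :=
  .ofRepr (b.repr.trans (lp.congrLeft 𝕜 𝕜 2 e.symm))

theorem Orthonormal.countable [TopologicalSpace.SeparableSpace E] {v : ι → E}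
    (hv : Orthonormal 𝕜 v) : Countable ι := by
  refine Pairwise.countable_of_isOpen_disjoint (s := fun i => Metric.ball (v i) (1 / 2))
    (fun i j hij => Metric.ball_disjoint_ball ?_) (fun _ => Metric.isOpen_ball)
    (fun _ => Metric.nonempty_ball.2 one_half_pos)
  have hsq : ‖v i - v j‖ ^ 2 = 2 := by
    rw [@norm_sub_sq 𝕜, hv.1 i, hv.1 j, hv.2 hij]
    norm_num
  rw [dist_eq_norm]
  nlinarith [norm_nonneg (v i - v j)]

theorem HilbertBasis.infinite [CompleteSpace E] (b : HilbertBasis ι 𝕜 E)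
    (hE : ¬ FiniteDimensional 𝕜 E) : Infinite ι := by
  by_contra hfin
  have : Fintype ι := @Fintype.ofFinite ι (not_infinite_iff_finite.1 hfin)
  exact hE (.of_basis b.toOrthonormalBasis.toBasis)

theorem nonempty_hilbertBasis_of_countable_of_infinite [CompleteSpace E]
    [TopologicalSpace.SeparableSpace E] (hE : ¬ FiniteDimensional 𝕜 E) (ι : Type*) [Countable ι]
    [Infinite ι] : Nonempty (HilbertBasis ι 𝕜 E) := by
  obtain ⟨w, b, -⟩ := exists_hilbertBasis 𝕜 E
  have := b.orthonormal.countable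
  have := b.infinite hE
  obtain ⟨_⟩ := nonempty_denumerable w
  obtain ⟨_⟩ := nonempty_denumerable ι
  exact ⟨b.reindex (Denumerable.equiv₂ w ι)⟩

end HilbertBasis

theorem Module.End.not_finiteDimensional_eigenspace_of_semiconj {K V W : Type*} [Field K]
    [AddCommGroup V] [Module K V] [AddCommGroup W] [Module K W] {A : Module.End K V}
    {B : Module.End K W} {J : V →ₗ[K] W} (hJ : Function.Injective J) {c : K}
    (h : ∀ x, B (J x) = c • J (A x)) {w : K} (hA : ¬ FiniteDimensional K (A.eigenspace w)) :
    ¬ FiniteDimensional K (B.eigenspace (c * w)) := by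
  refine fun _ => hA (.of_injective
    (J.restrict (p := A.eigenspace w) (q := B.eigenspace (c * w)) fun x hx => ?_) fun x y hxy => ?_)
  · rw [Module.End.mem_eigenspace_iff] at hx ⊢
    rw [h, hx, map_smul, smul_smul]
  · exact Subtype.ext (hJ (congrArg Subtype.val hxy))

theorem exists_operator_not_finiteDimensional_eigenspace {𝕜 E : Type*} [RCLike 𝕜]
    [NormedAddCommGroup E] [InnerProductSpace 𝕜 E] [CompleteSpace E]
    [TopologicalSpace.SeparableSpace E] (hE : ¬ FiniteDimensional 𝕜 E) :
    ∃ T : E →L[𝕜] E, ∀ w : 𝕜, ‖w‖ < 1 →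
      ¬ FiniteDimensional 𝕜 (Module.End.eigenspace (T : E →ₗ[𝕜] E) w) := by
  obtain ⟨b⟩ := nonempty_hilbertBasis_of_countable_of_infinite hE (ℕ × ℕ)
  let e := b.repr.toContinuousLinearEquiv
  let T : E →L[𝕜] E := e.symm.toContinuousLinearMap ∘L backwardShift 𝕜 2 ∘L e.toContinuousLinearMap
  refine ⟨T, fun w hw => ?_⟩
  rw [← one_mul w]
  exact Module.End.not_finiteDimensional_eigenspace_of_semiconj (B := (T : E →ₗ[𝕜] E))
    (J := e.symm.toLinearEquiv.toLinearMap) e.symm.injective (c := 1) (fun x => by simp [T])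
    (not_finiteDimensional_eigenspace_backwardShift (p := 2) hw)

theorem pointSpectrum_subset_spectrum {H : Type*} [NormedAddCommGroup H] [InnerProductSpace ℂ H]
    (T : H →L[ℂ] H) : pointSpectrum T ⊆ spectrum ℂ T := by
  intro z hz hres
  rw [spectrum.mem_resolventSet_iff, Algebra.algebraMap_eq_smul_one, ← IsUnit.neg_iff,
    neg_sub] at hres
  have hunit := hres.map ContinuousLinearMap.toLinearMapRingHom
  exact hz (LinearMap.ker_eq_bot.2 ((Module.End.isUnit_iff _).1 hunit).1)

theorem eigenvalues_of_universal {H : Type*} [NormedAddCommGroup H]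
    [InnerProductSpace ℂ H] [CompleteSpace H] [TopologicalSpace.SeparableSpace H]
    (hinf : ¬ FiniteDimensional ℂ H)
    (U : H →L[ℂ] H) (hU : IsUniversal U) :
    ∃ r : ℝ, 0 < r ∧
      (∀ z : ℂ, ‖z‖ < r → ¬ FiniteDimensional ℂ (LinearMap.ker ((U - z • (1 : H →L[ℂ] H) : H →L[ℂ] H) : H →ₗ[ℂ] H))) ∧
      Metric.ball (0 : ℂ) r ⊆ spectrum ℂ U ∧
      (0 : ℂ) ∈ interior (spectrum ℂ U) ∧
      (0 : ℂ) ∈ interior (pointSpectrum U) ∧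
      (0 : ℂ) ∈ interior (essentialSpectrum U) := by
  obtain ⟨T, hT⟩ := exists_operator_not_finiteDimensional_eigenspace hinf
  obtain ⟨M, -, -, c, hc, J, hJ⟩ := hU T
  have hc' : 0 < ‖c‖ := norm_pos_iff.2 hc
  have hker : ∀ z : ℂ, ‖z‖ < ‖c‖ → ¬ FiniteDimensional ℂ
      (LinearMap.ker ((U - z • (1 : H →L[ℂ] H) : H →L[ℂ] H) : H →ₗ[ℂ] H)) := by
    intro z hz
    have hzc : ‖z / c‖ < 1 := by rwa [norm_div, div_lt_one hc']
    have := Module.End.not_finiteDimensional_eigenspace_of_semiconj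
      (J := M.subtype ∘ₗ (J : H →ₗ[ℂ] M)) (Subtype.val_injective.comp J.injective) hJ (hT _ hzc)
    rwa [mul_div_cancel₀ z hc, Module.End.eigenspace_def] at this
  have hpoint : Metric.ball (0 : ℂ) ‖c‖ ⊆ pointSpectrum U := fun z hz hbot =>
    hker z (mem_ball_zero_iff.1 hz) (hbot ▸ inferInstance)
  have hess : Metric.ball (0 : ℂ) ‖c‖ ⊆ essentialSpectrum U := fun z hz hfred =>
    hker z (mem_ball_zero_iff.1 hz) hfred.1
  have hspec := hpoint.trans (pointSpectrum_subset_spectrum U)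
  have hinterior {s : Set ℂ} (hs : Metric.ball (0 : ℂ) ‖c‖ ⊆ s) : (0 : ℂ) ∈ interior s :=
    mem_interior.2 ⟨_, hs, Metric.isOpen_ball, Metric.mem_ball_self hc'⟩
  exact ⟨‖c‖, hc', hker, hspec, hinterior hspec, hinterior hpoint, hinterior hess⟩

end
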